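/- Let ψ be a degree-n Bézier quadrilateral patch in ℝ² with control vectors Δ⁰_{ij} and Δ¹_{ij}, and let r₀ and r₁ be the convex cones spanned by {Δ⁰_{ij}} and {Δ¹_{ij}} respectively. If r₀ ∩ r₁ = {0} and there exists a line through the origin with both cones (minus the origin) strictly on the same side, then the Jacobian determinant det(J) of ψ, where J = (∂ψ/∂ξ, ∂ψ/∂η), is strictly positive (up to a global orientation) at every point of [0,1]². -/

import Mathlib

/-!
Differentiating the Bernstein basis gives
`∂ξψ = n ∑ B_i^{n-1}(ξ) B_j^n(η) Δ⁰_ij` and `∂ηψ = n ∑ B_i^n(ξ) B_j^{n-1}(η) Δ¹_ij`.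
On `[0,1]²` these are nonnegative combinations with some positive coefficient, so they are
nonzero vectors of `r₀` and `r₁` (`φ` is positive on them).

For nonzero `a ∈ r₀`, `b ∈ r₁` the determinant `det(a, b)` cannot vanish: otherwise `b = l a`,
comparing `φ`-values gives `l > 0`, and then `b ∈ r₀ ∩ r₁ = {0}`. The nonzero parts of the cones
are convex (they are the parts where `φ > 0`), and a linear form that vanishes nowhere on a convex
set has constant sign there. Moving first `a` and then `b` away from the pair `(u, v)` with
`det(u, v) > 0` shows `det(a, b) > 0`.
-/

noncomputable def bern (n i : ℕ) (t : ℝ) : ℝ :=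
  (n.choose i : ℝ) * t ^ i * (1 - t) ^ (n - i)

/-- The 2D determinant of a pair of vectors. -/
noncomputable def det2 (u v : EuclideanSpace ℝ (Fin 2)) : ℝ :=
  u 0 * v 1 - u 1 * v 0

open Finset Polynomial

local notation "ℝ²" => EuclideanSpace ℝ (Fin 2)

lemma bern_eq_eval (n i : ℕ) (t : ℝ) : bern n i t = (bernsteinPolynomial ℝ n i).eval t := by
  simp [bern, bernsteinPolynomial]

lemma bern_nonneg (n i : ℕ) {t : ℝ} (ht : t ∈ Set.Icc (0 : ℝ) 1) : 0 ≤ bern n i t := by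
  have := ht.1
  have : 0 ≤ 1 - t := sub_nonneg.2 ht.2
  unfold bern
  positivity

lemma sum_bern (n : ℕ) (t : ℝ) : ∑ i : Fin (n + 1), bern n i t = 1 := by
  simp_rw [bern_eq_eval, Fin.sum_univ_eq_sum_range (fun i => (bernsteinPolynomial ℝ n i).eval t),
    ← eval_finsetSum, bernsteinPolynomial.sum, eval_one]

lemma exists_bern_pos (n : ℕ) {t : ℝ} (ht : t ∈ Set.Icc (0 : ℝ) 1) :
    ∃ i : Fin (n + 1), 0 < bern n i t := by
  by_contra! h
  have : ∑ i : Fin (n + 1), bern n i t = 0 :=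
    sum_eq_zero fun i _ => (h i).antisymm (bern_nonneg n i ht)
  simp [sum_bern] at this

lemma bern_eq_zero_of_lt {n i : ℕ} (h : n < i) (t : ℝ) : bern n i t = 0 := by
  simp [bern_eq_eval, bernsteinPolynomial.eq_zero_of_lt ℝ h]

@[fun_prop]
lemma differentiable_bern (n i : ℕ) : Differentiable ℝ (bern n i) := by
  unfold bern
  fun_prop

lemma hasDerivAt_bern_zero (m : ℕ) (t : ℝ) :
    HasDerivAt (bern (m + 1) 0) (-(m + 1) * bern m 0 t) t := by
  have := (bernsteinPolynomial ℝ (m + 1) 0).hasDerivAt t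
  simp_rw [bernsteinPolynomial.derivative_zero] at this
  simpa [funext (bern_eq_eval (m + 1) 0), bern_eq_eval] using this

lemma hasDerivAt_bern_succ (m i : ℕ) (t : ℝ) :
    HasDerivAt (bern (m + 1) (i + 1)) ((m + 1) * (bern m i t - bern m (i + 1) t)) t := by
  have := (bernsteinPolynomial ℝ (m + 1) (i + 1)).hasDerivAt t
  simp_rw [bernsteinPolynomial.derivative_succ] at this
  simpa [funext (bern_eq_eval (m + 1) (i + 1)), bern_eq_eval] using this

section Derivatives

variable {E : Type*} [NormedAddCommGroup E] [NormedSpace ℝ E]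

theorem hasDerivAt_bezier (m : ℕ) (P : Fin (m + 2) → E) (t : ℝ) :
    HasDerivAt (fun s => ∑ i : Fin (m + 2), bern (m + 1) i s • P i)
      ((m + 1 : ℝ) • ∑ i : Fin (m + 1), bern m i t • (P i.succ - P i.castSucc)) t := by
  have hsplit : (fun s => ∑ i : Fin (m + 2), bern (m + 1) i s • P i) =
      fun s => bern (m + 1) 0 s • P 0 + ∑ i : Fin (m + 1), bern (m + 1) (i + 1) s • P i.succ := by
    funext s
    simp [Fin.sum_univ_succ]
  have hshift : ∑ i : Fin (m + 1), bern m i t • P i.castSucc =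
      bern m 0 t • P 0 + ∑ i : Fin (m + 1), bern m (i + 1) t • P i.succ := by
    have h := Fin.sum_univ_castSucc (fun i : Fin (m + 2) => bern m i t • P i)
    rw [Fin.sum_univ_succ] at h
    simpa [bern_eq_zero_of_lt (Nat.lt_succ_self m)] using h.symm
  rw [hsplit]
  refine (((hasDerivAt_bern_zero m t).smul_const (P 0)).add (HasDerivAt.fun_sum (u := univ)
    fun (i : Fin (m + 1)) _ => (hasDerivAt_bern_succ m i t).smul_const (P i.succ))).congr_deriv ?_
  simp only [smul_sub, sum_sub_distrib, hshift, mul_smul, sub_smul, ← smul_sum]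
  module

theorem hasDerivAt_bezierPatch_fst (m k : ℕ) (Q : Fin (m + 2) → Fin (k + 1) → E) (ξ η : ℝ) :
    HasDerivAt
      (fun s => ∑ i : Fin (m + 2), ∑ j : Fin (k + 1), (bern (m + 1) i s * bern k j η) • Q i j)
      ((m + 1 : ℝ) • ∑ i : Fin (m + 1), ∑ j : Fin (k + 1),
        (bern m i ξ * bern k j η) • (Q i.succ j - Q i.castSucc j)) ξ := by
  simpa only [mul_smul, smul_sum, smul_sub, sum_sub_distrib] using
    hasDerivAt_bezier m (fun i => ∑ j : Fin (k + 1), bern k j η • Q i j) ξ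

theorem hasDerivAt_bezierPatch_snd (k m : ℕ) (Q : Fin (k + 1) → Fin (m + 2) → E) (ξ η : ℝ) :
    HasDerivAt
      (fun s => ∑ i : Fin (k + 1), ∑ j : Fin (m + 2), (bern k i ξ * bern (m + 1) j s) • Q i j)
      ((m + 1 : ℝ) • ∑ i : Fin (k + 1), ∑ j : Fin (m + 1),
        (bern k i ξ * bern m j η) • (Q i j.succ - Q i j.castSucc)) η := by
  simpa only [sum_comm (γ := Fin (k + 1)), mul_comm (bern k _ ξ)] using
    hasDerivAt_bezierPatch_fst m k (fun j i => Q i j) η ξ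

lemma fderiv_apply_one_zero {f : ℝ × ℝ → E} {x y : ℝ} {f' : E}
    (hf : DifferentiableAt ℝ f (x, y)) (h : HasDerivAt (fun s => f (s, y)) f' x) :
    fderiv ℝ f (x, y) (1, 0) = f' :=
  (hf.hasFDerivAt.comp_hasDerivAt x ((hasDerivAt_id x).prodMk (hasDerivAt_const x y))).unique h

lemma fderiv_apply_zero_one {f : ℝ × ℝ → E} {x y : ℝ} {f' : E}
    (hf : DifferentiableAt ℝ f (x, y)) (h : HasDerivAt (fun s => f (x, s)) f' y) :
    fderiv ℝ f (x, y) (0, 1) = f' :=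
  (hf.hasFDerivAt.comp_hasDerivAt y ((hasDerivAt_const y x).prodMk (hasDerivAt_id y))).unique h

end Derivatives

section Cone

variable {ι E : Type*} [Fintype ι] [AddCommGroup E] [Module ℝ E]

def finiteCone (v : ι → E) : ConvexCone ℝ E where
  carrier := {x | ∃ c : ι → ℝ, (∀ p, 0 ≤ c p) ∧ x = ∑ p, c p • v p}
  smul_mem' := by
    rintro t ht _ ⟨c, hc, rfl⟩
    exact ⟨fun p => t * c p, fun p => mul_nonneg ht.le (hc p), by simp only [smul_sum, mul_smul]⟩
  add_mem' := by
    rintro _ ⟨c, hc, rfl⟩ _ ⟨d, hd, rfl⟩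
    exact ⟨c + d, fun p => add_nonneg (hc p) (hd p),
      by simp only [Pi.add_apply, add_smul, sum_add_distrib]⟩

lemma sum_smul_mem_finiteCone (v : ι → E) {c : ι → ℝ} (hc : ∀ p, 0 ≤ c p) :
    ∑ p, c p • v p ∈ finiteCone v :=
  ⟨c, hc, rfl⟩

lemma mem_finiteCone_self (v : ι → E) (p : ι) : v p ∈ finiteCone v := by
  classical
  exact ⟨Pi.single p 1, fun q => by by_cases h : q = p <;> simp [h],
    by simp [Pi.single_apply, ite_smul]⟩

lemma map_sum_smul_pos (φ : E →ₗ[ℝ] ℝ) {c : ι → ℝ} {v : ι → E} (hc : ∀ p, 0 ≤ c p)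
    (hcpos : ∃ p, 0 < c p) (hv : ∀ p, 0 < φ (v p)) : 0 < φ (∑ p, c p • v p) := by
  simp only [map_sum, map_smul, smul_eq_mul]
  obtain ⟨p, hp⟩ := hcpos
  exact sum_pos' (fun q _ => mul_nonneg (hc q) (hv q).le) ⟨p, mem_univ p, mul_pos hp (hv p)⟩

lemma pos_of_convex_of_ne_zero {K : Set E} (hK : Convex ℝ K) (f : E →ₗ[ℝ] ℝ)
    (hf : ∀ x ∈ K, f x ≠ 0) {u x : E} (hu : u ∈ K) (hfu : 0 < f u) (hx : x ∈ K) : 0 < f x := by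
  by_contra! hfx
  obtain ⟨y, hy, hfy⟩ : (0 : ℝ) ∈ f '' K :=
    (hK.linear_image f).ordConnected.uIcc_subset ⟨x, hx, rfl⟩ ⟨u, hu, rfl⟩
      ⟨inf_le_left.trans hfx, hfu.le.trans le_sup_right⟩
  exact hf y hy hfy

end Cone

noncomputable def det2Bilin : ℝ² →ₗ[ℝ] ℝ² →ₗ[ℝ] ℝ :=
  LinearMap.mk₂ ℝ det2
    (fun _ _ _ => by simp only [det2, PiLp.add_apply]; ring)
    (fun _ _ _ => by simp only [det2, PiLp.smul_apply, smul_eq_mul]; ring)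
    (fun _ _ _ => by simp only [det2, PiLp.add_apply]; ring)
    (fun _ _ _ => by simp only [det2, PiLp.smul_apply, smul_eq_mul]; ring)

lemma det2_smul_smul (a b : ℝ) (x y : ℝ²) : det2 (a • x) (b • y) = (a * b) * det2 x y := by
  simp only [det2, PiLp.smul_apply, smul_eq_mul]
  ring

lemma exists_smul_eq_of_det2_eq_zero {a b : ℝ²} (ha : a ≠ 0) (h : det2 a b = 0) :
    ∃ l : ℝ, b = l • a := by
  have hab : a 0 * b 1 = a 1 * b 0 := sub_eq_zero.1 h
  by_cases h0 : a 0 = 0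
  · have h1 : a 1 ≠ 0 := fun h1 => ha (by ext k; fin_cases k <;> simp [h0, h1])
    refine ⟨b 1 / a 1, ?_⟩
    ext k
    fin_cases k
    · simp only [Fin.zero_eta, PiLp.smul_apply, smul_eq_mul]
      field_simp
      linarith
    · simp [h1]
  · refine ⟨b 0 / a 0, ?_⟩
    ext k
    fin_cases k
    · simp [h0]
    · simp only [Fin.mk_one, PiLp.smul_apply, smul_eq_mul]
      field_simp
      linarith

section Cones

variable {C₀ C₁ : ConvexCone ℝ ℝ²} {φ : ℝ² →ₗ[ℝ] ℝ}

lemma det2_ne_zero_of_mem_cones (hinter : (C₀ : Set ℝ²) ∩ C₁ ⊆ {0}) {a b : ℝ²}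
    (ha : a ∈ C₀) (hφa : 0 < φ a) (hb : b ∈ C₁) (hφb : 0 < φ b) : det2 a b ≠ 0 := by
  intro hdet
  obtain ⟨l, rfl⟩ := exists_smul_eq_of_det2_eq_zero (by rintro rfl; simp at hφa) hdet
  have hl : 0 < l := by
    rw [map_smul, smul_eq_mul] at hφb
    exact pos_of_mul_pos_left hφb hφa.le
  have hzero : l • a = 0 := hinter ⟨C₀.smul_mem hl ha, hb⟩
  simp [hzero] at hφb

theorem det2_pos_of_mem_cones (hinter : (C₀ : Set ℝ²) ∩ C₁ ⊆ {0})
    (hφ : ∀ w ∈ (C₀ : Set ℝ²) ∪ C₁, w ≠ 0 → 0 < φ w)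
    (horient : ∃ u ∈ C₀, ∃ v ∈ C₁, 0 < det2 u v) {a b : ℝ²}
    (ha : a ∈ C₀) (ha0 : a ≠ 0) (hb : b ∈ C₁) (hb0 : b ≠ 0) : 0 < det2 a b := by
  obtain ⟨u, hu, v, hv, huv⟩ := horient
  have hφu : 0 < φ u := hφ u (.inl hu) (by rintro rfl; simp [det2] at huv)
  have hφv : 0 < φ v := hφ v (.inr hv) (by rintro rfl; simp [det2] at huv)
  have hφa : 0 < φ a := hφ a (.inl ha) ha0
  have hK₀ : Convex ℝ ((C₀ : Set ℝ²) ∩ φ ⁻¹' Set.Ioi 0) :=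
    C₀.convex.inter ((convex_Ioi 0).linear_preimage φ)
  have hK₁ : Convex ℝ ((C₁ : Set ℝ²) ∩ φ ⁻¹' Set.Ioi 0) :=
    C₁.convex.inter ((convex_Ioi 0).linear_preimage φ)
  have hav : 0 < det2 a v :=
    pos_of_convex_of_ne_zero hK₀ (det2Bilin.flip v)
      (fun x hx => det2_ne_zero_of_mem_cones hinter hx.1 hx.2 hv hφv) ⟨hu, hφu⟩ huv ⟨ha, hφa⟩
  exact pos_of_convex_of_ne_zero hK₁ (det2Bilin a)
    (fun y hy => det2_ne_zero_of_mem_cones hinter ha hφa hy.1 hy.2) ⟨hv, hφv⟩ hav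
    ⟨hb, hφ b (.inr hb) hb0⟩

end Cones

lemma sum_bern_mul_smul_ne_zero {m k : ℕ} (φ : ℝ² →ₗ[ℝ] ℝ) {v : Fin (m + 1) × Fin (k + 1) → ℝ²}
    (hv : ∀ p, 0 < φ (v p)) {ξ η : ℝ} (hξ : ξ ∈ Set.Icc (0 : ℝ) 1) (hη : η ∈ Set.Icc (0 : ℝ) 1) :
    ∑ p, (bern m p.1 ξ * bern k p.2 η) • v p ≠ 0 := by
  obtain ⟨i, hi⟩ := exists_bern_pos m hξ
  obtain ⟨j, hj⟩ := exists_bern_pos k hη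
  have hpos := map_sum_smul_pos φ (fun p => mul_nonneg (bern_nonneg m p.1 hξ) (bern_nonneg k p.2 hη))
    ⟨(i, j), mul_pos hi hj⟩ hv
  intro h
  simp [h] at hpos

/-- Validity of a high-order Bézier quadrilateral element: if the convex
cones spanned by the 0- and 1-control vectors intersect only at the origin and lie
strictly on the same side of a line through the origin (and the orientation is chosen
so that some pair has positive determinant), then the Jacobian determinant of the patch
is strictly positive everywhere on [0,1]². -/
theorem bezier_quad_valid (n : ℕ) (hn : 0 < n)
    (Q : Fin (n + 1) → Fin (n + 1) → EuclideanSpace ℝ (Fin 2))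
    (ψ : ℝ × ℝ → EuclideanSpace ℝ (Fin 2))
    (hψ : ψ = fun p => ∑ i : Fin (n + 1), ∑ j : Fin (n + 1),
      (bern n i p.1 * bern n j p.2) • Q i j)
    (Δ₀ : Fin n → Fin (n + 1) → EuclideanSpace ℝ (Fin 2))
    (hΔ₀ : ∀ i j, Δ₀ i j = Q i.succ j - Q i.castSucc j)
    (Δ₁ : Fin (n + 1) → Fin n → EuclideanSpace ℝ (Fin 2))
    (hΔ₁ : ∀ i j, Δ₁ i j = Q i j.succ - Q i j.castSucc)
    (hΔ₀ne : ∀ i j, Δ₀ i j ≠ 0) (hΔ₁ne : ∀ i j, Δ₁ i j ≠ 0)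
    (r₀ r₁ : Set (EuclideanSpace ℝ (Fin 2)))
    (hr₀ : r₀ = {x | ∃ c : Fin n × Fin (n + 1) → ℝ, (∀ p, 0 ≤ c p) ∧
      x = ∑ p : Fin n × Fin (n + 1), c p • Δ₀ p.1 p.2})
    (hr₁ : r₁ = {x | ∃ c : Fin (n + 1) × Fin n → ℝ, (∀ p, 0 ≤ c p) ∧
      x = ∑ p : Fin (n + 1) × Fin n, c p • Δ₁ p.1 p.2})
    (hinter : r₀ ∩ r₁ = {0})
    (φ : EuclideanSpace ℝ (Fin 2) →ₗ[ℝ] ℝ)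
    (hφ : ∀ w ∈ r₀ ∪ r₁, w ≠ 0 → 0 < φ w)
    (horient : ∃ u ∈ r₀, ∃ v ∈ r₁, 0 < det2 u v) :
    ∀ ξ η : ℝ, ξ ∈ Set.Icc (0 : ℝ) 1 → η ∈ Set.Icc (0 : ℝ) 1 →
      0 < det2 (fderiv ℝ ψ (ξ, η) (1, 0)) (fderiv ℝ ψ (ξ, η) (0, 1)) := by
  intro ξ η hξ hη
  obtain ⟨m, rfl⟩ := Nat.exists_eq_succ_of_ne_zero hn.ne'
  -- after this, `r₀` and `r₁` are definitionally the carriers of `finiteCone` of the `Δ`s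
  subst hψ hr₀ hr₁
  have hdiff : DifferentiableAt ℝ (fun p : ℝ × ℝ => ∑ i : Fin (m + 2), ∑ j : Fin (m + 2),
      (bern (m + 1) i p.1 * bern (m + 1) j p.2) • Q i j) (ξ, η) := by fun_prop
  rw [fderiv_apply_one_zero hdiff (hasDerivAt_bezierPatch_fst m (m + 1) Q ξ η),
    fderiv_apply_zero_one hdiff (hasDerivAt_bezierPatch_snd (m + 1) m Q ξ η), det2_smul_smul]
  simp only [← hΔ₀, ← hΔ₁, ← Fintype.sum_prod_type']
  have hcoef {k l : ℕ} (p : Fin (k + 1) × Fin (l + 1)) : 0 ≤ bern k p.1 ξ * bern l p.2 η :=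
    mul_nonneg (bern_nonneg _ _ hξ) (bern_nonneg _ _ hη)
  refine mul_pos (by positivity) (det2_pos_of_mem_cones hinter.subset hφ horient
    (sum_smul_mem_finiteCone _ hcoef) ?_ (sum_smul_mem_finiteCone _ hcoef) ?_)
  · exact sum_bern_mul_smul_ne_zero φ
      (fun p => hφ _ (.inl (mem_finiteCone_self _ p)) (hΔ₀ne _ _)) hξ hη
  · exact sum_bern_mul_smul_ne_zero φ
      (fun p => hφ _ (.inr (mem_finiteCone_self _ p)) (hΔ₁ne _ _)) hξ hη
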